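/- Conditional on the outcome ok̄, the probability of outcome ok is 1/2: the squared amplitudes satisfy |⟨ok̄ ⊗ ok, φ⟩|² / (|⟨ok̄ ⊗ ok, φ⟩|² + |⟨ok̄ ⊗ fail, φ⟩|²) = 1/2. -/

import Mathlib

noncomputable section
open scoped InnerProductSpace
abbrev Q : Type := EuclideanSpace ℂ (Fin 2)
abbrev QQ : Type := EuclideanSpace ℂ (Fin 2 × Fin 2)
/-- standard basis of ℂ² -/
def e (i : Fin 2) : Q := EuclideanSpace.single i 1
/-- tensor product of two qubit vectors -/
def tp (a b : Q) : QQ := WithLp.toLp 2 (fun p : Fin 2 × Fin 2 => a p.1 * b p.2)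
/-- |h̄⟩ = e 0, |t̄⟩ = e 1, |−½⟩ = e 0, |½⟩ = e 1 -/
def phi : QQ := (Real.sqrt (1/3) : ℂ) • (tp (e 0) (e 0) + tp (e 1) (e 0) + tp (e 1) (e 1))
def okb : Q := (Real.sqrt 2 : ℂ)⁻¹ • (e 0 - e 1)
def failb : Q := (Real.sqrt 2 : ℂ)⁻¹ • (e 0 + e 1)
def okv : Q := (Real.sqrt 2 : ℂ)⁻¹ • (e 0 - e 1)
def failv : Q := (Real.sqrt 2 : ℂ)⁻¹ • (e 0 + e 1)

/-! Pairing `ok̄` with `h̄, t̄` gives `1/√2, −1/√2`, and pairing `ok` (resp. `fail`) with `−½, ½`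
gives `1/√2, −1/√2` (resp. `1/√2, 1/√2`). Over the three terms of `φ` the two amplitudes are thus
`√(1/3)/2 · (1 − 1 + 1)` and `√(1/3)/2 · (1 − 1 − 1)`: opposite, hence of equal modulus. -/

lemma inner_e_e (i j : Fin 2) : ⟪e i, e j⟫_ℂ = if i = j then 1 else 0 := by
  simp [e, EuclideanSpace.inner_single_left, PiLp.single_apply]

lemma inner_tp_tp (a b c d : Q) : ⟪tp a b, tp c d⟫_ℂ = ⟪a, c⟫_ℂ * ⟪b, d⟫_ℂ := by
  simp only [tp, PiLp.inner_apply, Fintype.sum_prod_type, Finset.sum_mul_sum, RCLike.inner_apply,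
    map_mul]
  congr! 2 with i - j
  ring

lemma inner_tp_phi (a b : Q) :
    ⟪tp a b, phi⟫_ℂ = (Real.sqrt (1/3) : ℂ) *
      (⟪a, e 0⟫_ℂ * ⟪b, e 0⟫_ℂ + ⟪a, e 1⟫_ℂ * ⟪b, e 0⟫_ℂ + ⟪a, e 1⟫_ℂ * ⟪b, e 1⟫_ℂ) := by
  simp only [phi, inner_smul_right, inner_add_right, inner_tp_tp]

lemma inner_tp_okb_okv_phi :
    ⟪tp okb okv, phi⟫_ℂ = (Real.sqrt (1/3) : ℂ) * (Real.sqrt 2 : ℂ)⁻¹ ^ 2 := by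
  simp only [inner_tp_phi, okb, okv, inner_smul_left, inner_sub_left, inner_e_e,
    map_inv₀, Complex.conj_ofReal, Fin.isValue, ↓reduceIte, Fin.reduceEq]
  ring

lemma inner_tp_okb_failv_phi : ⟪tp okb failv, phi⟫_ℂ = -⟪tp okb okv, phi⟫_ℂ := by
  rw [inner_tp_okb_okv_phi]
  simp only [inner_tp_phi, okb, failv, inner_smul_left, inner_sub_left, inner_add_left, inner_e_e,
    map_inv₀, Complex.conj_ofReal, Fin.isValue, ↓reduceIte, Fin.reduceEq]
  ring

lemma norm_sq_div_norm_sq_add_norm_sq_of_norm_eq {E : Type*} [NormedAddCommGroup E] {x y : E}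
    (hx : x ≠ 0) (hxy : ‖y‖ = ‖x‖) : ‖x‖ ^ 2 / (‖x‖ ^ 2 + ‖y‖ ^ 2) = 1 / 2 := by
  have : ‖x‖ ≠ 0 := norm_ne_zero_iff.mpr hx
  rw [hxy]
  field_simp
  ring

theorem conditional_prob_ok_given_okbar :
    ‖⟪tp okb okv, phi⟫_ℂ‖ ^ 2 /
      (‖⟪tp okb okv, phi⟫_ℂ‖ ^ 2 + ‖⟪tp okb failv, phi⟫_ℂ‖ ^ 2) = 1 / 2 := by
  refine norm_sq_div_norm_sq_add_norm_sq_of_norm_eq ?_ ?_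
  · simp [inner_tp_okb_okv_phi]
  · rw [inner_tp_okb_failv_phi, norm_neg]
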